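/- arXiv:1207.5660 — 2 statements merged into one kernel-verified Lean document; each statement's English description precedes it below -/
import Mathlib

section
/- Let N ≥ 1 and let f, g : 2^{1,...,N} → ℝ be defined by f(Λ) = log₂(1 + Σ_{i∈Λ} c_i) and g(Λ) = log₂(1 + (1/N)·Σ_{i∈Λ} b_i) with b_i, c_i ≥ 0. Then for every Λ ⊆ {1,...,N}: [log₂(1 + Σ_{i∈Λᶜ} b_i) + log₂(1 + (Σ_{i∈Λ} √c_i)²)] − [g(Λᶜ) + f(Λ)] ≤ 2·log₂ N. -/
/-!
Both differences are at most `log₂ N`. Splitting the power `1/N` loses at most a factor `N`,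
since `1 + s ≤ N (1 + s / N)`, and coherent combining gains at most a factor `N`, since by
Cauchy–Schwarz `(∑_{i ∈ Λ} √cᵢ)² ≤ |Λ| ∑_{i ∈ Λ} cᵢ ≤ N ∑_{i ∈ Λ} cᵢ`.
-/

open Finset

lemma Real.logb_sub_logb_le_logb_of_le_mul {b x y a : ℝ} (hb : 1 < b) (hx : 0 < x) (hy : 0 < y)
    (h : x ≤ a * y) : Real.logb b x - Real.logb b y ≤ Real.logb b a := by
  rw [← Real.logb_div hx.ne' hy.ne']
  exact Real.logb_le_logb_of_le hb (div_pos hx hy) ((div_le_iff₀ hy).2 h)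

lemma one_add_le_mul_one_add {x y a : ℝ} (ha : 1 ≤ a) (h : x ≤ a * y) :
    1 + x ≤ a * (1 + y) := by
  linarith [mul_add a 1 y]

lemma sq_sum_sqrt_le_card_mul_sum {ι : Type*} (s : Finset ι) {c : ι → ℝ}
    (hc : ∀ i ∈ s, 0 ≤ c i) : (∑ i ∈ s, √(c i)) ^ 2 ≤ #s * ∑ i ∈ s, c i := by
  calc (∑ i ∈ s, √(c i)) ^ 2 ≤ #s * ∑ i ∈ s, √(c i) ^ 2 := sq_sum_le_card_mul_sum_sq
    _ = #s * ∑ i ∈ s, c i := by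
      rw [sum_congr rfl fun i hi => Real.sq_sqrt (hc i hi)]

theorem stmt_5 (N : ℕ) (hN : 1 ≤ N) (b c : Fin N → ℝ)
    (hb : ∀ i, 0 ≤ b i) (hc : ∀ i, 0 ≤ c i)
    (f g : Finset (Fin N) → ℝ)
    (hf : ∀ Λ : Finset (Fin N), f Λ = Real.logb 2 (1 + ∑ i ∈ Λ, c i))
    (hg : ∀ Λ : Finset (Fin N), g Λ = Real.logb 2 (1 + (1 / N) * ∑ i ∈ Λ, b i))
    (Λ : Finset (Fin N)) :
    (Real.logb 2 (1 + ∑ i ∈ Λᶜ, b i)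
        + Real.logb 2 (1 + (∑ i ∈ Λ, Real.sqrt (c i)) ^ 2))
      - (g Λᶜ + f Λ) ≤ 2 * Real.logb 2 N := by
  have hN : (1 : ℝ) ≤ N := mod_cast hN
  have hB : 0 ≤ ∑ i ∈ Λᶜ, b i := sum_nonneg fun i _ => hb i
  have hC : 0 ≤ ∑ i ∈ Λ, c i := sum_nonneg fun i _ => hc i
  have hcard : (#Λ : ℝ) ≤ N := mod_cast (card_le_univ Λ).trans_eq (Fintype.card_fin N)
  have hsplit : Real.logb 2 (1 + ∑ i ∈ Λᶜ, b i) - g Λᶜ ≤ Real.logb 2 N := by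
    rw [hg]
    refine Real.logb_sub_logb_le_logb_of_le_mul one_lt_two (by positivity) (by positivity)
      (one_add_le_mul_one_add hN (le_of_eq ?_))
    field_simp
  have hcombine :
      Real.logb 2 (1 + (∑ i ∈ Λ, √(c i)) ^ 2) - f Λ ≤ Real.logb 2 N := by
    rw [hf]
    refine Real.logb_sub_logb_le_logb_of_le_mul one_lt_two (by positivity) (by positivity)
      (one_add_le_mul_one_add hN ?_)
    exact (sq_sum_sqrt_le_card_mul_sum Λ fun i _ => hc i).trans
      (mul_le_mul_of_nonneg_right hcard hC)
  linarith
end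

section
/- For positive reals λ₁ ≥ λ₂ ≥ ... ≥ λ_n > 0, P > 0, and nonnegative reals Q̃₁,...,Q̃_n with Σᵢ Q̃ᵢ = n_t·P where n_t ≥ n ≥ 1 are integers: Σ_{i=1}^n log₂(1 + Q̃ᵢλᵢ) − Σ_{i=1}^n log₂(1 + Pλᵢ) ≤ n·log₂(1 + (n_t − 1)/n). -/
open Finset

theorem stmt_7 (n nt : ℕ) (hn : 1 ≤ n) (hnt : n ≤ nt)
    (lam : Fin n → ℝ) (hlam : ∀ i, 0 < lam i)
    (hsorted : ∀ i j : Fin n, i ≤ j → lam j ≤ lam i)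
    (P : ℝ) (hP : 0 < P)
    (Q : Fin n → ℝ) (hQ : ∀ i, 0 ≤ Q i) (hQsum : ∑ i, Q i = nt * P) :
    (∑ i, Real.logb 2 (1 + Q i * lam i)) - (∑ i, Real.logb 2 (1 + P * lam i)) ≤
      n * Real.logb 2 (1 + (nt - 1) / n) := by
  have hnR : (0:ℝ) < n := by exact_mod_cast hn
  have hntR : (1:ℝ) ≤ nt := by exact_mod_cast hn.trans hnt
  have hlog2 : (0:ℝ) < Real.log 2 := Real.log_pos one_lt_two
  set x : Fin n → ℝ := fun i => max P (Q i) / P with hxdef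
  have hx1 : ∀ i, 1 ≤ x i := fun i => (one_le_div hP).2 (le_max_left _ _)
  have hxpos : ∀ i, 0 < x i := fun i => lt_of_lt_of_le one_pos (hx1 i)
  -- Step A: termwise bound
  have stepA : ∀ i, Real.logb 2 (1 + Q i * lam i) - Real.logb 2 (1 + P * lam i)
      ≤ Real.logb 2 (x i) := by
    intro i
    have hl := hlam i
    have hq := hQ i
    have h1 : (0:ℝ) < 1 + Q i * lam i := by nlinarith
    have h2 : (0:ℝ) < 1 + P * lam i := by nlinarith
    have hM1 : P ≤ max P (Q i) := le_max_left _ _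
    have hM2 : Q i ≤ max P (Q i) := le_max_right _ _
    have key : 1 + Q i * lam i ≤ x i * (1 + P * lam i) := by
      rw [hxdef]
      rw [div_mul_eq_mul_div, le_div_iff₀ hP]
      nlinarith [mul_le_mul_of_nonneg_right hM2 (mul_pos hP hl).le]
    have h3 : Real.logb 2 (1 + Q i * lam i) ≤ Real.logb 2 (x i * (1 + P * lam i)) :=
      Real.logb_le_logb_of_le one_lt_two h1 key
    rw [Real.logb_mul (ne_of_gt (hxpos i)) (ne_of_gt h2)] at h3
    linarith
  -- sum of maxes bound
  have hsumM : ∑ i, max P (Q i) ≤ ((n:ℝ) + nt - 1) * P := by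
    by_cases hcase : ∃ j, P ≤ Q j
    · obtain ⟨j, hj⟩ := hcase
      have hsplit : ∑ i, max P (Q i)
          = max P (Q j) + ∑ i ∈ univ.erase j, max P (Q i) :=
        (Finset.add_sum_erase _ _ (mem_univ j)).symm
      have hQsplit : Q j + ∑ i ∈ univ.erase j, Q i = ∑ i, Q i :=
        Finset.add_sum_erase _ _ (mem_univ j)
      have hcard : ((univ.erase j).card : ℝ) = (n:ℝ) - 1 := by
        rw [Finset.card_erase_of_mem (mem_univ j)]
        simp [Nat.cast_sub hn]
      have hbound : ∑ i ∈ univ.erase j, max P (Q i)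
          ≤ ∑ i ∈ univ.erase j, (P + Q i) := by
        apply Finset.sum_le_sum
        intro i _
        exact max_le (le_add_of_nonneg_right (hQ i)) (le_add_of_nonneg_left hP.le)
      rw [hsplit, max_eq_right hj]
      have hsum2 : ∑ i ∈ univ.erase j, (P + Q i)
          = ((n:ℝ) - 1) * P + ∑ i ∈ univ.erase j, Q i := by
        rw [Finset.sum_add_distrib, Finset.sum_const, nsmul_eq_mul, hcard]
      rw [hQsum] at hQsplit
      nlinarith [hbound, hsum2]
    · push_neg at hcase
      have hmx : ∀ i ∈ univ, max P (Q i) = P := fun i _ => max_eq_left (hcase i).le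
      rw [Finset.sum_congr rfl hmx, Finset.sum_const, nsmul_eq_mul]
      simp only [Finset.card_univ, Fintype.card_fin]
      nlinarith
  have hsumx : ∑ i, x i ≤ (n:ℝ) + nt - 1 := by
    rw [hxdef]
    rw [← Finset.sum_div, div_le_iff₀ hP]
    exact hsumM
  -- Step B: Jensen
  set c : ℝ := ((n:ℝ) + nt - 1) / n with hcdef
  have hc1 : 1 ≤ c := by
    rw [hcdef, le_div_iff₀ hnR]
    linarith
  have hc0 : 0 < c := lt_of_lt_of_le one_pos hc1
  have jensen : ∑ i, (1 / (n:ℝ)) • Real.log (x i)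
      ≤ Real.log (∑ i, (1 / (n:ℝ)) • x i) := by
    apply (strictConcaveOn_log_Ioi.concaveOn).le_map_sum
    · intro i _; positivity
    · rw [Finset.sum_const, Finset.card_univ, Fintype.card_fin, nsmul_eq_mul]
      field_simp
    · intro i _; exact hxpos i
  have havg : ∑ i, (1 / (n:ℝ)) • x i ≤ c := by
    simp only [smul_eq_mul, ← Finset.mul_sum]
    calc (1 / (n:ℝ)) * ∑ i, x i ≤ (1 / (n:ℝ)) * ((n:ℝ) + nt - 1) := by
          apply mul_le_mul_of_nonneg_left hsumx (by positivity)
      _ = c := by rw [hcdef]; field_simp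
  have havgpos : 0 < ∑ i, (1 / (n:ℝ)) • x i := by
    have hge : (1:ℝ) ≤ ∑ i, (1 / (n:ℝ)) • x i := by
      simp only [smul_eq_mul, ← Finset.mul_sum]
      have : (n:ℝ) ≤ ∑ i, x i := by
        calc (n:ℝ) = ∑ _i : Fin n, (1:ℝ) := by
              simp
          _ ≤ ∑ i, x i := Finset.sum_le_sum fun i _ => hx1 i
      calc (1:ℝ) = (1 / (n:ℝ)) * n := by field_simp
        _ ≤ (1 / (n:ℝ)) * ∑ i, x i := by
            apply mul_le_mul_of_nonneg_left this (by positivity)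
    linarith
  have hfin : ∑ i, Real.logb 2 (x i) ≤ (n:ℝ) * Real.logb 2 c := by
    have h1 : (1 / (n:ℝ)) * ∑ i, Real.log (x i) ≤ Real.log c := by
      have h2 : Real.log (∑ i, (1 / (n:ℝ)) • x i) ≤ Real.log c :=
        Real.log_le_log havgpos havg
      calc (1 / (n:ℝ)) * ∑ i, Real.log (x i)
          = ∑ i, (1 / (n:ℝ)) • Real.log (x i) := by
            simp [smul_eq_mul, Finset.mul_sum]
        _ ≤ Real.log c := jensen.trans h2
    have h3 : ∑ i, Real.log (x i) ≤ (n:ℝ) * Real.log c := by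
      have h4 := mul_le_mul_of_nonneg_left h1 hnR.le
      calc ∑ i, Real.log (x i)
          = (n:ℝ) * ((1 / (n:ℝ)) * ∑ i, Real.log (x i)) := by field_simp
        _ ≤ (n:ℝ) * Real.log c := h4
    simp only [Real.logb]
    rw [← Finset.sum_div]
    exact ((div_le_div_iff_of_pos_right hlog2).mpr h3).trans_eq (by ring)
  have heq : (1:ℝ) + ((nt:ℝ) - 1) / n = c := by
    rw [hcdef]; field_simp; ring
  calc (∑ i, Real.logb 2 (1 + Q i * lam i)) - (∑ i, Real.logb 2 (1 + P * lam i))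
      = ∑ i, (Real.logb 2 (1 + Q i * lam i) - Real.logb 2 (1 + P * lam i)) := by
        rw [Finset.sum_sub_distrib]
    _ ≤ ∑ i, Real.logb 2 (x i) := Finset.sum_le_sum fun i _ => stepA i
    _ ≤ (n:ℝ) * Real.logb 2 c := hfin
    _ = (n:ℝ) * Real.logb 2 (1 + ((nt:ℝ) - 1) / n) := by rw [heq]
end
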